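/- Let A be SPD and S the Additive-Schwarz operator for blocks 𝓑 covering {1,...,n}. If the index k belongs to exactly n_k of the blocks in 𝓑, then the Rayleigh quotient of the standard basis vector e_k with S⁻¹ satisfies e_kᵀ S⁻¹ e_k ≤ A_{kk} / n_k. -/

import Mathlib

/-!
Put `x = S⁻¹ e_k`, so that `e_kᵀ S⁻¹ e_k = x_k = xᵀ S x`. For every block `B ∋ k`, Cauchy–Schwarz
in the inner product of `(R_B A R_Bᵀ)⁻¹` gives `x_k² ≤ A_kk · (R_B x)ᵀ (R_B A R_Bᵀ)⁻¹ (R_B x)`.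
Summing over the `n_k` such blocks yields `n_k x_k² ≤ A_kk · xᵀ S x = A_kk x_k`, hence
`x_k ≤ A_kk / n_k`. If `S` is singular, `S⁻¹ = 0` by convention and the bound is trivial.
-/

open scoped Matrix

/-- The restriction matrix `R_B` whose rows are the standard basis vectors indexed by `B`. -/
def restr {n : ℕ} (B : Finset (Fin n)) : Matrix {i // i ∈ B} (Fin n) ℝ :=
  Matrix.of fun b j => if (b : Fin n) = j then 1 else 0

open Matrix

section QuadraticForm

variable {m : Type*} [Fintype m]

theorem Matrix.PosSemidef.dotProduct_mulVec_sq_le {P : Matrix m m ℝ} (hP : P.PosSemidef)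
    (u v : m → ℝ) : (u ⬝ᵥ P *ᵥ v) ^ 2 ≤ (u ⬝ᵥ P *ᵥ u) * (v ⬝ᵥ P *ᵥ v) := by
  let := P.toSeminormedAddCommGroup hP
  let := P.toInnerProductSpace hP
  have inner_eq (x y : m → ℝ) : inner ℝ x y = x ⬝ᵥ P *ᵥ y := by
    change (P *ᵥ y) ⬝ᵥ star x = _
    rw [dotProduct_comm, star_trivial]
  rw [sq, ← inner_eq, ← inner_eq, ← inner_eq]
  exact real_inner_mul_inner_self_le u v

theorem Matrix.PosDef.dotProduct_sq_le [DecidableEq m] {M : Matrix m m ℝ} (hM : M.PosDef)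
    (u y : m → ℝ) : (u ⬝ᵥ y) ^ 2 ≤ (u ⬝ᵥ M *ᵥ u) * (y ⬝ᵥ M⁻¹ *ᵥ y) := by
  have hdet : IsUnit M.det := isUnit_iff_ne_zero.mpr hM.det_pos.ne'
  have hMu : M *ᵥ u = u ᵥ* M := by
    rw [← mulVec_transpose, (isHermitian_iff_isSymm.mp hM.isHermitian).eq]
  have hcross : (M *ᵥ u) ⬝ᵥ M⁻¹ *ᵥ y = u ⬝ᵥ y := by
    rw [hMu, ← dotProduct_mulVec, mulVec_mulVec, mul_nonsing_inv M hdet, one_mulVec]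
  have hdiag : (M *ᵥ u) ⬝ᵥ M⁻¹ *ᵥ (M *ᵥ u) = u ⬝ᵥ M *ᵥ u := by
    rw [mulVec_mulVec, nonsing_inv_mul M hdet, one_mulVec, dotProduct_comm]
  simpa only [hcross, hdiag] using hM.inv.posSemidef.dotProduct_mulVec_sq_le (M *ᵥ u) y

theorem Matrix.PosDef.sq_apply_le_mul_dotProduct_inv_mulVec [DecidableEq m] {M : Matrix m m ℝ}
    (hM : M.PosDef) (y : m → ℝ) (j : m) : y j ^ 2 ≤ M j j * (y ⬝ᵥ M⁻¹ *ᵥ y) := by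
  simpa [mulVec_single_one, dotProduct_single_one] using hM.dotProduct_sq_le (Pi.single j 1) y

theorem dotProduct_inv_mulVec_single_le [DecidableEq m] {S : Matrix m m ℝ} {k : m} {a b : ℝ}
    (ha : 0 < a) (hb : 0 ≤ b) (hS : ∀ x : m → ℝ, a * x k ^ 2 ≤ b * (x ⬝ᵥ S *ᵥ x)) :
    Pi.single k 1 ⬝ᵥ S⁻¹ *ᵥ Pi.single k 1 ≤ b / a := by
  by_cases hdet : IsUnit S.det
  · set x := S⁻¹ *ᵥ Pi.single k 1
    have hSx : S *ᵥ x = Pi.single k 1 := by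
      rw [mulVec_mulVec, mul_nonsing_inv S hdet, one_mulVec]
    have hx := hS x
    rw [hSx, dotProduct_single_one] at hx
    rw [single_one_dotProduct, le_div_iff₀ ha]
    nlinarith
  · rw [nonsing_inv_apply_not_isUnit S hdet, zero_mulVec, dotProduct_zero]
    positivity

end QuadraticForm

section AdditiveSchwarz

variable {n : ℕ}

@[simp]
theorem restr_mulVec_apply {B : Finset (Fin n)} (x : Fin n → ℝ) (b : {i // i ∈ B}) :
    (restr B *ᵥ x) b = x b := by
  simp [restr, mulVec, dotProduct]

@[simp]
theorem vecMul_restr_apply {B : Finset (Fin n)} (y : {i // i ∈ B} → ℝ) (b : {i // i ∈ B}) :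
    (y ᵥ* restr B) b = y b := by
  simp [restr, vecMul, dotProduct]

@[simp]
theorem restr_mul_mul_transpose_apply {B : Finset (Fin n)} (A : Matrix (Fin n) (Fin n) ℝ)
    (b b' : {i // i ∈ B}) : (restr B * A * (restr B)ᵀ) b b' = A b b' := by
  simp [restr, mul_apply]

theorem Matrix.PosDef.restr_mul_mul_transpose {A : Matrix (Fin n) (Fin n) ℝ} (hA : A.PosDef)
    (B : Finset (Fin n)) : (restr B * A * (restr B)ᵀ).PosDef := by
  have hinj : Function.Injective (restr B).vecMul := fun y y' h =>
    funext fun b => by simpa using congrFun h b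
  simpa using hA.mul_mul_conjTranspose_same hinj

noncomputable def additiveSchwarz (A : Matrix (Fin n) (Fin n) ℝ) (𝓑 : Finset (Finset (Fin n))) :
    Matrix (Fin n) (Fin n) ℝ :=
  ∑ B ∈ 𝓑, (restr B)ᵀ * (restr B * A * (restr B)ᵀ)⁻¹ * restr B

theorem dotProduct_additiveSchwarz_mulVec (A : Matrix (Fin n) (Fin n) ℝ)
    (𝓑 : Finset (Finset (Fin n))) (x : Fin n → ℝ) :
    x ⬝ᵥ additiveSchwarz A 𝓑 *ᵥ x =
      ∑ B ∈ 𝓑, (restr B *ᵥ x) ⬝ᵥ (restr B * A * (restr B)ᵀ)⁻¹ *ᵥ (restr B *ᵥ x) := by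
  simp only [additiveSchwarz, sum_mulVec, dotProduct_sum, ← mulVec_mulVec, dotProduct_mulVec,
    vecMul_transpose]

theorem card_mul_sq_le_dotProduct_additiveSchwarz_mulVec {A : Matrix (Fin n) (Fin n) ℝ}
    (hA : A.PosDef) (𝓑 : Finset (Finset (Fin n))) (k : Fin n) (x : Fin n → ℝ) :
    (𝓑.filter (fun B => k ∈ B)).card * x k ^ 2 ≤ A k k * (x ⬝ᵥ additiveSchwarz A 𝓑 *ᵥ x) := by
  set q : Finset (Fin n) → ℝ :=
    fun B => (restr B *ᵥ x) ⬝ᵥ (restr B * A * (restr B)ᵀ)⁻¹ *ᵥ (restr B *ᵥ x)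
  have hq_nonneg (B : Finset (Fin n)) : 0 ≤ A k k * q B :=
    mul_nonneg hA.diag_pos.le <| by
      simpa only [star_trivial] using
        (hA.restr_mul_mul_transpose B).inv.posSemidef.dotProduct_mulVec_nonneg (restr B *ᵥ x)
  calc (𝓑.filter (fun B => k ∈ B)).card * x k ^ 2
      = ∑ B ∈ 𝓑.filter (fun B => k ∈ B), x k ^ 2 := by rw [Finset.sum_const, nsmul_eq_mul]
    _ ≤ ∑ B ∈ 𝓑.filter (fun B => k ∈ B), A k k * q B := by
      refine Finset.sum_le_sum fun B hB => ?_
      simpa only [restr_mulVec_apply, restr_mul_mul_transpose_apply] using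
        (hA.restr_mul_mul_transpose B).sq_apply_le_mul_dotProduct_inv_mulVec
        (restr B *ᵥ x) ⟨k, (Finset.mem_filter.mp hB).2⟩
    _ ≤ ∑ B ∈ 𝓑, A k k * q B :=
      Finset.sum_le_sum_of_subset_of_nonneg (Finset.filter_subset _ _) fun B _ _ => hq_nonneg B
    _ = A k k * (x ⬝ᵥ additiveSchwarz A 𝓑 *ᵥ x) := by
      rw [← Finset.mul_sum, dotProduct_additiveSchwarz_mulVec]

end AdditiveSchwarz

theorem stmt_5_general {n : ℕ} (A : Matrix (Fin n) (Fin n) ℝ) (hA : A.PosDef)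
    (𝓑 : Finset (Finset (Fin n)))
    (k : Fin n) (nk : ℕ) (hnk : (𝓑.filter (fun B => k ∈ B)).card = nk) (hpos : 0 < nk) :
    (Pi.single k 1 : Fin n → ℝ) ⬝ᵥ
        ((∑ B ∈ 𝓑, (restr B)ᵀ * (restr B * A * (restr B)ᵀ)⁻¹ * restr B)⁻¹ *ᵥ
          (Pi.single k 1 : Fin n → ℝ)) ≤ A k k / nk := by
  refine dotProduct_inv_mulVec_single_le (S := additiveSchwarz A 𝓑) (by exact_mod_cast hpos)
    hA.diag_pos.le fun x => ?_
  rw [← hnk]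
  exact card_mul_sq_le_dotProduct_additiveSchwarz_mulVec hA 𝓑 k x

/-- If the index `k` belongs to exactly `nk` blocks, then the Rayleigh quotient of the
standard basis vector `e_k` with `S⁻¹` is at most `A k k / nk`. -/
theorem stmt_5 {n : ℕ} (A : Matrix (Fin n) (Fin n) ℝ) (hA : A.PosDef)
    (𝓑 : Finset (Finset (Fin n))) (hcov : ∀ i : Fin n, ∃ B ∈ 𝓑, i ∈ B)
    (k : Fin n) (nk : ℕ) (hnk : (𝓑.filter (fun B => k ∈ B)).card = nk) (hpos : 0 < nk) :
    (Pi.single k 1 : Fin n → ℝ) ⬝ᵥ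
        ((∑ B ∈ 𝓑, (restr B)ᵀ * (restr B * A * (restr B)ᵀ)⁻¹ * restr B)⁻¹ *ᵥ
          (Pi.single k 1 : Fin n → ℝ)) ≤ A k k / nk :=
  stmt_5_general A hA 𝓑 k nk hnk hpos
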